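/- Let 0 < q < ∞, 0 < p < ∞, and define s implicitly via the appearing norms; let u ∈ C(0,∞) be a weight and v, w weights with 0 < V(x) = ∫₀ˣ v < ∞ and 0 < W_*(x) = ∫_x^∞ w < ∞ for all x > 0. Then the inequality ‖S_u f‖_{L^q(w)} ≤ c ‖f‖_{L^p(v)} for all non-increasing f ∈ 𝔐⁺ holds if and only if both: (a) the inequality ‖S_{u^p}(∫_·^∞ h)‖_{L^{q/p}(w)} ≤ c^p ‖h‖_{L^1(V)} holds for all h ∈ 𝔐⁺, and (b) ‖S_u 𝟏‖_{L^q(w)} ≤ c ‖𝟏‖_{L^p(v)}, where 𝟏 is the constant function 1. -/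

import Mathlib

open MeasureTheory Set Filter Topology
open scoped ENNReal

/-!
Necessity: test the inequality on `f = (∫_·^∞ h)^(1/p)` and on `f = 𝟏`; by Tonelli,
`‖(∫_·^∞ h)^(1/p)‖_{L^p(v)}^p = ‖h‖_{L^1(V)}`.

Sufficiency: for non-increasing `f` put `g = f^p` and `L = inf g`. The smoothed negative
derivative `h_ε = (g - g(· + ε)) / ε` satisfies `g(· + ε) - L ≤ ∫_·^∞ h_ε ≤ g`, so
`‖h_ε‖_{L^1(V)} ≤ ‖g‖_{L^1(v)}` by Tonelli. A monotone function is right-continuous off a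
countable set, whence `S_{u^p} g ≤ sup_ε S_{u^p}(g(· + ε) - L) + L (S_u 𝟏)^p`. The first term
is controlled by the reduced inequality applied to `h_ε` (and monotone convergence in `ε`), the
second by the inequality for `𝟏` together with `L V(∞) ≤ ‖g‖_{L^1(v)}`.
-/

/-- `‖S_u f‖_{L^q(w)} ≤ c ‖f‖_{L^p(v)}` for all non-increasing `f ∈ 𝔐⁺`. -/
def MainIneq5 (p q : ℝ) (u v w : ℝ → ℝ≥0∞) (c : ℝ≥0∞) : Prop :=
  ∀ f : ℝ → ℝ≥0∞, Measurable f → AntitoneOn f (Ioi (0 : ℝ)) →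
    (∫⁻ t in Ioi (0 : ℝ),
        (essSup (fun τ => u τ * f τ) (volume.restrict (Ioc 0 t))) ^ q * w t) ^ (1 / q)
      ≤ c * (∫⁻ t in Ioi (0 : ℝ), (f t) ^ p * v t) ^ (1 / p)

/-- `‖S_{u^p}(∫_·^∞ h)‖_{L^{q/p}(w)} ≤ c^p ‖h‖_{L^1(V)}` for all `h ∈ 𝔐⁺`. -/
def RedIneq5 (p q : ℝ) (u v w : ℝ → ℝ≥0∞) (c : ℝ≥0∞) : Prop :=
  ∀ h : ℝ → ℝ≥0∞, Measurable h →
    (∫⁻ t in Ioi (0 : ℝ),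
        (essSup (fun τ => (u τ) ^ p * ∫⁻ s in Ioi τ, h s)
          (volume.restrict (Ioc 0 t))) ^ (q / p) * w t) ^ (p / q)
      ≤ c ^ p * ∫⁻ t in Ioi (0 : ℝ), h t * ∫⁻ s in Ioc 0 t, v s

/-- `‖S_u 𝟏‖_{L^q(w)} ≤ c ‖𝟏‖_{L^p(v)}`. -/
def OneIneq5 (p q : ℝ) (u v w : ℝ → ℝ≥0∞) (c : ℝ≥0∞) : Prop :=
  (∫⁻ t in Ioi (0 : ℝ), (essSup u (volume.restrict (Ioc 0 t))) ^ q * w t) ^ (1 / q)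
    ≤ c * (∫⁻ t in Ioi (0 : ℝ), v t) ^ (1 / p)

namespace ENNReal

variable {α : Type*} {m : MeasurableSpace α}

theorem essSup_rpow (μ : Measure α) (f : α → ℝ≥0∞) {r : ℝ} (hr : 0 < r) :
    essSup (fun x => f x ^ r) μ = essSup f μ ^ r :=
  (OrderIso.essSup_apply f μ (orderIsoRpow r hr)).symm

theorem iSup_rpow {ι : Sort*} (F : ι → ℝ≥0∞) {r : ℝ} (hr : 0 < r) :
    (⨆ i, F i) ^ r = ⨆ i, F i ^ r :=
  (orderIsoRpow r hr).map_iSup F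

theorem essSup_iSup_le {ι : Type*} [Countable ι] (μ : Measure α) (F : ι → α → ℝ≥0∞) :
    essSup (fun x => ⨆ i, F i x) μ ≤ ⨆ i, essSup (F i) μ := by
  refine essSup_le_of_ae_le _ ?_
  filter_upwards [ae_all_iff.2 fun i => ENNReal.ae_le_essSup (F i)] with x hx
  exact iSup_mono hx

theorem rpow_add_le_two_rpow_mul (a b : ℝ≥0∞) {r : ℝ} (hr : 0 ≤ r) :
    (a + b) ^ r ≤ 2 ^ r * (a ^ r + b ^ r) :=
  calc (a + b) ^ r ≤ (2 * max a b) ^ r := by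
        gcongr; rw [two_mul]; exact add_le_add (le_max_left a b) (le_max_right a b)
    _ = 2 ^ r * max (a ^ r) (b ^ r) := by
        rw [ENNReal.mul_rpow_of_nonneg _ _ hr, (ENNReal.monotone_rpow_of_nonneg hr).map_max]
    _ ≤ 2 ^ r * (a ^ r + b ^ r) := by gcongr; exact max_le le_self_add le_add_self

theorem lintegral_rpow_add_le (μ : Measure α) {F G w : α → ℝ≥0∞} (hF : Measurable F)
    (hw : Measurable w) {r : ℝ} (hr : 0 ≤ r) :
    ∫⁻ x, (F x + G x) ^ r * w x ∂μ ≤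
      2 ^ r * (∫⁻ x, F x ^ r * w x ∂μ + ∫⁻ x, G x ^ r * w x ∂μ) :=
  calc ∫⁻ x, (F x + G x) ^ r * w x ∂μ
      ≤ ∫⁻ x, 2 ^ r * (F x ^ r * w x + G x ^ r * w x) ∂μ := by
        refine lintegral_mono fun x => ?_
        rw [← add_mul, ← mul_assoc]
        gcongr
        exact rpow_add_le_two_rpow_mul _ _ hr
    _ = 2 ^ r * (∫⁻ x, F x ^ r * w x ∂μ + ∫⁻ x, G x ^ r * w x ∂μ) := by
        rw [lintegral_const_mul' _ _ (rpow_ne_top_of_nonneg hr ofNat_ne_top),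
          lintegral_add_left (f := fun x => F x ^ r * w x) ((hF.pow_const r).mul hw)]

end ENNReal

theorem setLIntegral_Ioi_eq_iSup_Ioc (a : ℝ) (h : ℝ → ℝ≥0∞) :
    ∫⁻ s in Ioi a, h s = ⨆ b, ∫⁻ s in Ioc a b, h s := by
  have hmono : Monotone fun b => Ioc a b := fun _ _ hb => Ioc_subset_Ioc_right hb
  simp_rw [← withDensity_apply' h]
  rw [← iUnion_Ioc_right a, hmono.measure_iUnion]

theorem setLIntegral_Ioi_mul_setLIntegral_Ioi (a : ℝ) {v h : ℝ → ℝ≥0∞} (hv : Measurable v)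
    (hh : Measurable h) :
    ∫⁻ t in Ioi a, v t * ∫⁻ s in Ioi t, h s = ∫⁻ s in Ioi a, h s * ∫⁻ t in Ioc a s, v t := by
  classical
  let F : ℝ → ℝ → ℝ≥0∞ := fun t s => if t < s then v t * h s else 0
  have hF : Measurable (Function.uncurry F) :=
    Measurable.ite (measurableSet_lt measurable_fst measurable_snd)
      ((hv.comp measurable_fst).mul (hh.comp measurable_snd)) measurable_const
  have hF_right (t : ℝ) : F t = (Ioi t).indicator fun s => v t * h s := by
    ext s; simp [F, indicator_apply]
  have hF_left (s : ℝ) : (fun t => F t s) = (Iio s).indicator fun t => v t * h s := by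
    ext t; simp [F, indicator_apply]
  have hsupp : (fun s => h s * ∫⁻ t in Ioo a s, v t).support ⊆ Ioi a := fun s hs => by
    by_contra has
    simp [Ioo_eq_empty (by simpa using has : ¬a < s)] at hs
  calc ∫⁻ t in Ioi a, v t * ∫⁻ s in Ioi t, h s = ∫⁻ t in Ioi a, ∫⁻ s, F t s := by
        simp_rw [hF_right, lintegral_indicator measurableSet_Ioi, lintegral_const_mul _ hh]
    _ = ∫⁻ s, ∫⁻ t in Ioi a, F t s := lintegral_lintegral_swap hF.aemeasurable
    _ = ∫⁻ s, h s * ∫⁻ t in Ioo a s, v t := by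
        simp_rw [hF_left, lintegral_indicator measurableSet_Iio,
          Measure.restrict_restrict measurableSet_Iio, Iio_inter_Ioi, lintegral_mul_const _ hv,
          mul_comm]
    _ = ∫⁻ s in Ioi a, h s * ∫⁻ t in Ioc a s, v t := by
        rw [← setLIntegral_eq_of_support_subset hsupp]
        simp_rw [setLIntegral_congr Ioo_ae_eq_Ioc]

theorem AntitoneOn.ae_le_iSup_add_one_div {g : ℝ → ℝ≥0∞} (hg : AntitoneOn g (Ioi 0)) :
    ∀ᵐ τ ∂volume.restrict (Ioi (0 : ℝ)), g τ ≤ ⨆ n : ℕ, g (τ + 1 / ((n : ℝ) + 1)) := by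
  rw [ae_restrict_iff' measurableSet_Ioi]
  filter_upwards [measure_eq_zero_iff_ae_notMem.1
    (hg.countable_not_continuousWithinAt.measure_zero volume)] with τ hτ hτpos
  have hcont : ContinuousWithinAt g (Ioi 0) τ := by
    by_contra h; exact hτ ⟨hτpos, h⟩
  have hlim : Tendsto (fun n : ℕ => τ + 1 / ((n : ℝ) + 1)) atTop (𝓝[Ioi 0] τ) := by
    refine tendsto_nhdsWithin_iff.2 ⟨?_, Eventually.of_forall fun n => ?_⟩
    · simpa using tendsto_one_div_add_atTop_nhds_zero_nat.const_add τ
    · exact add_pos (mem_Ioi.1 hτpos) Nat.one_div_pos_of_nat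
  exact le_of_tendsto' (hcont.tendsto.comp hlim) fun n => le_iSup (fun n : ℕ => g _) n

theorem monotone_essSup_restrict_Ioc (a : ℝ) (F : ℝ → ℝ≥0∞) :
    Monotone fun t => essSup F (volume.restrict (Ioc a t)) := fun _ _ h =>
  essSup_mono_measure' (Measure.restrict_mono (Ioc_subset_Ioc_right h) le_rfl)

section AntitoneOnIoi

variable {g : ℝ → ℝ≥0∞} {a b ε r R : ℝ}

theorem AntitoneOn.setLIntegral_Ioc_le (hg : AntitoneOn g (Ioi 0)) (ha : 0 < a) :
    ∫⁻ s in Ioc a b, g s ≤ g a * ENNReal.ofReal (b - a) :=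
  calc ∫⁻ s in Ioc a b, g s ≤ ∫⁻ _ in Ioc a b, g a :=
        setLIntegral_mono' measurableSet_Ioc fun x hx => hg ha (ha.trans hx.1) hx.1.le
    _ = g a * ENNReal.ofReal (b - a) := by rw [setLIntegral_const, Real.volume_Ioc]

theorem AntitoneOn.le_setLIntegral_Ioc (hg : AntitoneOn g (Ioi 0)) (ha : 0 < a) :
    g b * ENNReal.ofReal (b - a) ≤ ∫⁻ s in Ioc a b, g s :=
  calc g b * ENNReal.ofReal (b - a) = ∫⁻ _ in Ioc a b, g b := by
        rw [setLIntegral_const, Real.volume_Ioc]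
    _ ≤ ∫⁻ s in Ioc a b, g s :=
        setLIntegral_mono' measurableSet_Ioc fun x hx =>
          hg (ha.trans hx.1) (ha.trans (hx.1.trans_le hx.2)) hx.2

/-- Telescoping: both sides equal `∫_{(r, R+ε]} g - ∫_{(r+ε, R+ε]} g`. -/
theorem AntitoneOn.setLIntegral_Ioc_sub_shift_add (hgm : Measurable g)
    (hg : AntitoneOn g (Ioi 0)) (hfin : ∀ x, 0 < x → g x ≠ ⊤) (hε : 0 ≤ ε) (hr : 0 < r)
    (hrR : r ≤ R) :
    (∫⁻ s in Ioc r R, (g s - g (s + ε))) + ∫⁻ s in Ioc R (R + ε), g s =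
      ∫⁻ s in Ioc r (r + ε), g s := by
  have hshift : ∫⁻ s in Ioc r R, g (s + ε) = ∫⁻ s in Ioc (r + ε) (R + ε), g s := by
    have := (measurePreserving_add_right volume ε).setLIntegral_comp_preimage_emb
      (measurableEmbedding_addRight ε) g (Ioc (r + ε) (R + ε))
    rwa [preimage_add_const_Ioc, add_sub_cancel_right, add_sub_cancel_right] at this
  have hsplit : (∫⁻ s in Ioc r R, (g s - g (s + ε))) + ∫⁻ s in Ioc (r + ε) (R + ε), g s =
      ∫⁻ s in Ioc r R, g s := by
    rw [← hshift, ← lintegral_add_right (g := fun s => g (s + ε)) _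
      (hgm.comp (measurable_add_const ε))]
    refine setLIntegral_congr_fun measurableSet_Ioc fun s hs => tsub_add_cancel_of_le ?_
    exact hg (hr.trans hs.1) (mem_Ioi.2 (by linarith [hs.1])) (le_add_of_nonneg_right hε)
  have hfin' : ∫⁻ s in Ioc (r + ε) (R + ε), g s ≠ ⊤ :=
    ne_top_of_le_ne_top (ENNReal.mul_ne_top (hfin _ (by linarith)) ENNReal.ofReal_ne_top)
      (hg.setLIntegral_Ioc_le (by linarith))
  have hunion {x y z : ℝ} (hxy : x ≤ y) (hyz : y ≤ z) :
      (∫⁻ s in Ioc x y, g s) + ∫⁻ s in Ioc y z, g s = ∫⁻ s in Ioc x z, g s := by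
    rw [← lintegral_union measurableSet_Ioc (Ioc_disjoint_Ioc_of_le le_rfl),
      Ioc_union_Ioc_eq_Ioc hxy hyz]
  refine (ENNReal.add_left_inj hfin').1 ?_
  calc _ = ((∫⁻ s in Ioc r R, (g s - g (s + ε))) + ∫⁻ s in Ioc (r + ε) (R + ε), g s) +
        ∫⁻ s in Ioc R (R + ε), g s := by ring
    _ = ∫⁻ s in Ioc r (R + ε), g s := by rw [hsplit, hunion hrR (by linarith)]
    _ = _ := (hunion (by linarith) (by linarith)).symm

noncomputable def negSlope (g : ℝ → ℝ≥0∞) (ε s : ℝ) : ℝ≥0∞ :=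
  (ENNReal.ofReal ε)⁻¹ * (g s - g (s + ε))

theorem measurable_negSlope (hgm : Measurable g) (ε : ℝ) : Measurable (negSlope g ε) :=
  measurable_const.mul (hgm.sub (hgm.comp (measurable_add_const ε)))

theorem AntitoneOn.setLIntegral_Ioi_negSlope_le (hgm : Measurable g)
    (hg : AntitoneOn g (Ioi 0)) (hfin : ∀ x, 0 < x → g x ≠ ⊤) (hε : 0 < ε) (hr : 0 < r) :
    ∫⁻ s in Ioi r, negSlope g ε s ≤ g r := by
  have hε' : ENNReal.ofReal ε ≠ 0 := (ENNReal.ofReal_pos.2 hε).ne'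
  rw [setLIntegral_Ioi_eq_iSup_Ioc]
  refine iSup_le fun R => ?_
  calc ∫⁻ s in Ioc r R, negSlope g ε s
      ≤ (ENNReal.ofReal ε)⁻¹ * ∫⁻ s in Ioc r (max r R), (g s - g (s + ε)) := by
        rw [← lintegral_const_mul' _ _ (ENNReal.inv_ne_top.2 hε')]
        exact lintegral_mono_set (Ioc_subset_Ioc_right (le_max_right r R))
    _ ≤ (ENNReal.ofReal ε)⁻¹ * (g r * ENNReal.ofReal (r + ε - r)) := by
        gcongr
        exact (le_self_add.trans_eq (hg.setLIntegral_Ioc_sub_shift_add hgm hfin hε.le hr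
          (le_max_left r R))).trans (hg.setLIntegral_Ioc_le hr)
    _ = g r := by
        rw [add_sub_cancel_left, mul_comm, mul_assoc,
          ENNReal.mul_inv_cancel hε' ENNReal.ofReal_ne_top, mul_one]

theorem AntitoneOn.le_setLIntegral_Ioi_negSlope_add (hgm : Measurable g)
    (hg : AntitoneOn g (Ioi 0)) (hfin : ∀ x, 0 < x → g x ≠ ⊤) (hε : 0 < ε) (hr : 0 < r)
    (hR : 0 < R) :
    g (r + ε) ≤ (∫⁻ s in Ioi r, negSlope g ε s) + g R := by
  rcases le_total R r with hRr | hrR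
  · exact (hg hR (mem_Ioi.2 (by linarith)) (by linarith)).trans le_add_self
  set e := ENNReal.ofReal ε
  have he : e ≠ 0 := (ENNReal.ofReal_pos.2 hε).ne'
  have hcancel (x : ℝ≥0∞) : e⁻¹ * (x * e) = x := by
    rw [mul_comm x, ← mul_assoc, ENNReal.inv_mul_cancel he ENNReal.ofReal_ne_top, one_mul]
  have hmul : g (r + ε) * e ≤ (∫⁻ s in Ioc r R, (g s - g (s + ε))) + g R * e :=
    calc g (r + ε) * e ≤ ∫⁻ s in Ioc r (r + ε), g s := by
          simpa [e] using hg.le_setLIntegral_Ioc (b := r + ε) hr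
      _ = (∫⁻ s in Ioc r R, (g s - g (s + ε))) + ∫⁻ s in Ioc R (R + ε), g s :=
          (hg.setLIntegral_Ioc_sub_shift_add hgm hfin hε.le hr hrR).symm
      _ ≤ (∫⁻ s in Ioc r R, (g s - g (s + ε))) + g R * e := by
          gcongr
          simpa [e] using hg.setLIntegral_Ioc_le (b := R + ε) hR
  calc g (r + ε) = e⁻¹ * (g (r + ε) * e) := (hcancel _).symm
    _ ≤ e⁻¹ * ((∫⁻ s in Ioc r R, (g s - g (s + ε))) + g R * e) := by gcongr
    _ = (∫⁻ s in Ioc r R, negSlope g ε s) + g R := by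
        rw [mul_add, hcancel, ← lintegral_const_mul' _ _ (ENNReal.inv_ne_top.2 he)]; rfl
    _ ≤ (∫⁻ s in Ioi r, negSlope g ε s) + g R := by
        gcongr; exact Ioc_subset_Ioi_self

end AntitoneOnIoi

section WeightedInequalities

variable {p q : ℝ} {u v w g : ℝ → ℝ≥0∞} {c c' : ℝ≥0∞}

theorem RedIneq5.mono (hp : 0 < p) (h : RedIneq5 p q u v w c) (hc : c ≤ c') :
    RedIneq5 p q u v w c' :=
  fun k hk => (h k hk).trans (by gcongr)

theorem OneIneq5.mono (h : OneIneq5 p q u v w c) (hc : c ≤ c') : OneIneq5 p q u v w c' :=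
  h.trans (by gcongr)

theorem MainIneq5.oneIneq5 (h : MainIneq5 p q u v w c) : OneIneq5 p q u v w c := by
  simpa [OneIneq5] using h (fun _ => 1) measurable_const antitoneOn_const

theorem MainIneq5.redIneq5 (hp : 0 < p) (hv : Measurable v)
    (h : MainIneq5 p q u v w c) : RedIneq5 p q u v w c := by
  intro k hk
  set T : ℝ → ℝ≥0∞ := fun τ => ∫⁻ s in Ioi τ, k s
  have hT : Antitone T := fun a b hab => lintegral_mono_set (Ioi_subset_Ioi hab)
  have hTp (τ : ℝ) : (T τ ^ (1 / p)) ^ p = T τ := by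
    rw [← ENNReal.rpow_mul, one_div_mul_cancel hp.ne', ENNReal.rpow_one]
  have hmain := h (fun τ => T τ ^ (1 / p)) (hT.measurable.pow_const _)
    fun a _ b _ hab => ENNReal.rpow_le_rpow (hT hab) (by positivity)
  have hess (t : ℝ) : essSup (fun τ => u τ ^ p * T τ) (volume.restrict (Ioc 0 t)) ^ (q / p) =
      essSup (fun τ => u τ * T τ ^ (1 / p)) (volume.restrict (Ioc 0 t)) ^ q := by
    rw [← mul_div_cancel₀ q hp.ne', ENNReal.rpow_mul, ← ENNReal.essSup_rpow _ _ hp,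
      mul_div_cancel₀ q hp.ne']
    simp_rw [ENNReal.mul_rpow_of_nonneg _ _ hp.le, hTp]
  have hrhs : ∫⁻ t in Ioi 0, (T t ^ (1 / p)) ^ p * v t =
      ∫⁻ t in Ioi 0, k t * ∫⁻ s in Ioc 0 t, v s := by
    simp_rw [hTp, mul_comm (T _)]
    exact setLIntegral_Ioi_mul_setLIntegral_Ioi 0 hv hk
  calc (∫⁻ t in Ioi 0, essSup (fun τ => u τ ^ p * T τ)
          (volume.restrict (Ioc 0 t)) ^ (q / p) * w t) ^ (p / q)
      = ((∫⁻ t in Ioi 0, essSup (fun τ => u τ * T τ ^ (1 / p))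
          (volume.restrict (Ioc 0 t)) ^ q * w t) ^ (1 / q)) ^ p := by
        simp_rw [hess, ← ENNReal.rpow_mul, one_div_mul_eq_div]
    _ ≤ (c * (∫⁻ t in Ioi 0, (T t ^ (1 / p)) ^ p * v t) ^ (1 / p)) ^ p := by gcongr
    _ = c ^ p * ∫⁻ t in Ioi 0, k t * ∫⁻ s in Ioc 0 t, v s := by
        rw [ENNReal.mul_rpow_of_nonneg _ _ hp.le, ← ENNReal.rpow_mul, one_div_mul_cancel hp.ne',
          ENNReal.rpow_one, hrhs]

theorem RedIneq5.lintegral_le (hp : 0 < p) (hq : 0 < q) (h : RedIneq5 p q u v w c)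
    {k : ℝ → ℝ≥0∞} (hk : Measurable k) :
    ∫⁻ t in Ioi 0, essSup (fun τ => u τ ^ p * ∫⁻ s in Ioi τ, k s)
        (volume.restrict (Ioc 0 t)) ^ (q / p) * w t ≤
      (c ^ p * ∫⁻ t in Ioi 0, k t * ∫⁻ s in Ioc 0 t, v s) ^ (q / p) := by
  rw [← ENNReal.rpow_inv_le_iff (div_pos hq hp), inv_div]
  exact h k hk

theorem OneIneq5.lintegral_le (hq : 0 < q) (h : OneIneq5 p q u v w c) :
    ∫⁻ t in Ioi 0, essSup u (volume.restrict (Ioc 0 t)) ^ q * w t ≤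
      c ^ q * (∫⁻ t in Ioi 0, v t) ^ (q / p) := by
  have hrhs : (c * (∫⁻ t in Ioi 0, v t) ^ (1 / p)) ^ q =
      c ^ q * (∫⁻ t in Ioi 0, v t) ^ (q / p) := by
    rw [ENNReal.mul_rpow_of_nonneg _ _ hq.le, ← ENNReal.rpow_mul, one_div_mul_eq_div]
  rw [← hrhs, ← ENNReal.rpow_inv_le_iff hq, ← one_div]
  exact h

theorem mainIneq5_zero_of_oneIneq5_zero (hq : 0 < q) (hw : Measurable w)
    (h : OneIneq5 p q u v w 0) : MainIneq5 p q u v w 0 := by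
  intro f _ _
  rw [zero_mul, le_zero_iff, ENNReal.rpow_eq_zero_iff_of_pos (by positivity)]
  have hB : Measurable fun t => essSup u (volume.restrict (Ioc 0 t)) ^ q * w t :=
    ((monotone_essSup_restrict_Ioc 0 u).measurable.pow_const q).mul hw
  rw [OneIneq5, zero_mul, le_zero_iff, ENNReal.rpow_eq_zero_iff_of_pos (by positivity),
    lintegral_eq_zero_iff hB] at h
  refine (lintegral_congr_ae ?_).trans lintegral_zero
  filter_upwards [h] with t ht
  rcases mul_eq_zero.1 ht with hu | hw
  · have hu : u =ᵐ[volume.restrict (Ioc 0 t)] 0 :=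
      ENNReal.essSup_eq_zero_iff.1 ((ENNReal.rpow_eq_zero_iff_of_pos hq).1 hu)
    have huf : essSup (fun τ => u τ * f τ) (volume.restrict (Ioc 0 t)) = 0 := by
      refine ENNReal.essSup_eq_zero_iff.2 ?_
      filter_upwards [hu] with τ hτ
      simp [hτ]
    simp [huf, hq]
  · simp [hw]

theorem AntitoneOn.ne_top_of_setLIntegral_mul_ne_top (hg : AntitoneOn g (Ioi 0))
    (hI : ∫⁻ t in Ioi 0, g t * v t ≠ ⊤) {x : ℝ} (hx : 0 < x)
    (hV : 0 < ∫⁻ s in Ioc 0 x, v s) : g x ≠ ⊤ := by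
  intro htop
  refine hI (top_le_iff.1 ?_)
  calc ⊤ = ⊤ * ∫⁻ s in Ioc 0 x, v s := (ENNReal.top_mul hV.ne').symm
    _ ≤ ∫⁻ s in Ioc 0 x, ⊤ * v s := lintegral_const_mul_le _ _
    _ ≤ ∫⁻ s in Ioc 0 x, g s * v s := by
        refine setLIntegral_mono' measurableSet_Ioc fun s hs => ?_
        rw [← htop]
        exact mul_le_mul_left (hg hs.1 hx hs.2) _
    _ ≤ ∫⁻ t in Ioi 0, g t * v t := lintegral_mono_set Ioc_subset_Ioi_self

theorem AntitoneOn.setLIntegral_negSlope_mul_le (hgm : Measurable g)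
    (hg : AntitoneOn g (Ioi 0)) (hfin : ∀ x, 0 < x → g x ≠ ⊤) (hv : Measurable v) {ε : ℝ}
    (hε : 0 < ε) :
    ∫⁻ t in Ioi 0, negSlope g ε t * ∫⁻ s in Ioc 0 t, v s ≤ ∫⁻ t in Ioi 0, g t * v t := by
  rw [← setLIntegral_Ioi_mul_setLIntegral_Ioi 0 hv (measurable_negSlope hgm ε)]
  refine setLIntegral_mono' measurableSet_Ioi fun t ht => ?_
  rw [mul_comm (g t)]
  gcongr
  exact hg.setLIntegral_Ioi_negSlope_le hgm hfin hε ht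

theorem AntitoneOn.essSup_mul_le_iSup_add (hg : AntitoneOn g (Ioi 0)) (a : ℝ → ℝ≥0∞)
    (L : ℝ≥0∞) (t : ℝ) :
    essSup (fun τ => a τ * g τ) (volume.restrict (Ioc 0 t)) ≤
      (⨆ n : ℕ, essSup (fun τ => a τ * (g (τ + 1 / ((n : ℝ) + 1)) - L))
        (volume.restrict (Ioc 0 t))) + L * essSup a (volume.restrict (Ioc 0 t)) := by
  have hae : ∀ᵐ τ ∂volume.restrict (Ioc 0 t),
      a τ * g τ ≤ (⨆ n : ℕ, a τ * (g (τ + 1 / ((n : ℝ) + 1)) - L)) + a τ * L := by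
    filter_upwards [ae_restrict_of_ae_restrict_of_subset Ioc_subset_Ioi_self
      hg.ae_le_iSup_add_one_div] with τ hτ
    calc a τ * g τ ≤ a τ * ⨆ n : ℕ, ((g (τ + 1 / ((n : ℝ) + 1)) - L) + L) := by
          gcongr
          exact hτ.trans (iSup_mono fun n => le_tsub_add)
      _ = _ := by rw [← ENNReal.iSup_add, mul_add, ENNReal.mul_iSup]
  calc essSup (fun τ => a τ * g τ) (volume.restrict (Ioc 0 t))
      ≤ essSup ((fun τ => ⨆ n : ℕ, a τ * (g (τ + 1 / ((n : ℝ) + 1)) - L)) + fun τ => L * a τ)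
          (volume.restrict (Ioc 0 t)) :=
        essSup_mono_ae (hae.mono fun τ hτ => hτ.trans_eq (by simp [mul_comm]))
    _ ≤ _ := by
        refine (ENNReal.essSup_add_le _ _).trans ?_
        rw [ENNReal.essSup_const_mul]
        gcongr
        exact ENNReal.essSup_iSup_le _ _

theorem RedIneq5.lintegral_iSup_essSup_le (hp : 0 < p) (hq : 0 < q) (hv : Measurable v)
    (hw : Measurable w) (h : RedIneq5 p q u v w c) (hgm : Measurable g)
    (hg : AntitoneOn g (Ioi 0)) (hfin : ∀ x, 0 < x → g x ≠ ⊤) :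
    ∫⁻ t in Ioi 0, (⨆ n : ℕ, essSup (fun τ => u τ ^ p *
        (g (τ + 1 / ((n : ℝ) + 1)) - ⨅ R : Ioi (0 : ℝ), g R)) (volume.restrict (Ioc 0 t))) ^
        (q / p) * w t ≤
      (c ^ p * ∫⁻ t in Ioi 0, g t * v t) ^ (q / p) := by
  set L := ⨅ R : Ioi (0 : ℝ), g R
  set A : ℕ → ℝ → ℝ≥0∞ := fun n t => essSup (fun τ => u τ ^ p *
    (g (τ + 1 / ((n : ℝ) + 1)) - L)) (volume.restrict (Ioc 0 t))
  have hqp : 0 < q / p := div_pos hq hp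
  have hA_mono (t : ℝ) : Monotone fun n => A n t := fun n m hnm => by
    refine essSup_mono_ae ((ae_restrict_iff' measurableSet_Ioc).2 (ae_of_all _ fun τ hτ => ?_))
    dsimp only
    gcongr
    exact hg (add_pos hτ.1 Nat.one_div_pos_of_nat) (add_pos hτ.1 Nat.one_div_pos_of_nat)
      (add_le_add_right (Nat.one_div_le_one_div hnm) τ)
  have hA_le (n : ℕ) (t : ℝ) : A n t ≤ essSup (fun τ => u τ ^ p *
      ∫⁻ s in Ioi τ, negSlope g (1 / ((n : ℝ) + 1)) s) (volume.restrict (Ioc 0 t)) := by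
    refine essSup_mono_ae ((ae_restrict_iff' measurableSet_Ioc).2 (ae_of_all _ fun τ hτ => ?_))
    dsimp only
    gcongr
    refine tsub_le_iff_right.2 (le_trans ?_ (ENNReal.add_iInf).ge)
    exact le_iInf fun R => hg.le_setLIntegral_Ioi_negSlope_add hgm hfin
      Nat.one_div_pos_of_nat hτ.1 R.2
  calc ∫⁻ t in Ioi 0, (⨆ n, A n t) ^ (q / p) * w t
      = ⨆ n, ∫⁻ t in Ioi 0, A n t ^ (q / p) * w t := by
        simp_rw [ENNReal.iSup_rpow _ hqp, ENNReal.iSup_mul]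
        refine lintegral_iSup (fun n => ?_) fun n m hnm t => ?_
        · exact ((monotone_essSup_restrict_Ioc 0 _).measurable.pow_const _).mul hw
        · dsimp only
          gcongr
          exact hA_mono t hnm
    _ ≤ (c ^ p * ∫⁻ t in Ioi 0, g t * v t) ^ (q / p) := by
        refine iSup_le fun n => ?_
        calc ∫⁻ t in Ioi 0, A n t ^ (q / p) * w t
            ≤ ∫⁻ t in Ioi 0, essSup (fun τ => u τ ^ p * ∫⁻ s in Ioi τ,
                negSlope g (1 / ((n : ℝ) + 1)) s) (volume.restrict (Ioc 0 t)) ^ (q / p) * w t := by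
              gcongr with t
              exact hA_le n t
          _ ≤ (c ^ p * ∫⁻ t in Ioi 0, negSlope g (1 / ((n : ℝ) + 1)) t *
                ∫⁻ s in Ioc 0 t, v s) ^ (q / p) :=
              h.lintegral_le hp hq (measurable_negSlope hgm _)
          _ ≤ (c ^ p * ∫⁻ t in Ioi 0, g t * v t) ^ (q / p) := by
              gcongr (c ^ p * ?_) ^ _
              exact hg.setLIntegral_negSlope_mul_le hgm hfin hv Nat.one_div_pos_of_nat

theorem OneIneq5.lintegral_mul_rpow_le (hp : 0 < p) (hq : 0 < q) (hw : Measurable w)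
    (h : OneIneq5 p q u v w c) {L : ℝ≥0∞} (hL : ∀ x, 0 < x → L ≤ g x) :
    ∫⁻ t in Ioi 0, (L * essSup u (volume.restrict (Ioc 0 t)) ^ p) ^ (q / p) * w t ≤
      (c ^ p * ∫⁻ t in Ioi 0, g t * v t) ^ (q / p) := by
  have hLv : L * ∫⁻ t in Ioi 0, v t ≤ ∫⁻ t in Ioi 0, g t * v t :=
    (lintegral_const_mul_le _ _).trans
      (setLIntegral_mono' measurableSet_Ioi fun t ht => by gcongr; exact hL t ht)
  have hB : Measurable fun t => essSup u (volume.restrict (Ioc 0 t)) ^ q * w t :=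
    ((monotone_essSup_restrict_Ioc 0 u).measurable.pow_const q).mul hw
  calc ∫⁻ t in Ioi 0, (L * essSup u (volume.restrict (Ioc 0 t)) ^ p) ^ (q / p) * w t
      = L ^ (q / p) * ∫⁻ t in Ioi 0, essSup u (volume.restrict (Ioc 0 t)) ^ q * w t := by
        rw [← lintegral_const_mul _ hB]
        simp_rw [ENNReal.mul_rpow_of_nonneg _ _ (div_pos hq hp).le, ← ENNReal.rpow_mul,
          mul_div_cancel₀ q hp.ne', mul_assoc]
    _ ≤ L ^ (q / p) * (c ^ q * (∫⁻ t in Ioi 0, v t) ^ (q / p)) := by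
        gcongr; exact h.lintegral_le hq
    _ = (c ^ p * (L * ∫⁻ t in Ioi 0, v t)) ^ (q / p) := by
        rw [ENNReal.mul_rpow_of_nonneg _ _ (div_pos hq hp).le,
          ENNReal.mul_rpow_of_nonneg _ _ (div_pos hq hp).le, ← ENNReal.rpow_mul,
          mul_div_cancel₀ q hp.ne']
        ring
    _ ≤ (c ^ p * ∫⁻ t in Ioi 0, g t * v t) ^ (q / p) := by gcongr

theorem lintegral_essSup_mul_rpow_le (hp : 0 < p) (hq : 0 < q) (hv : Measurable v)
    (hw : Measurable w) (hRed : RedIneq5 p q u v w c) (hOne : OneIneq5 p q u v w c)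
    (hgm : Measurable g) (hg : AntitoneOn g (Ioi 0)) (hfin : ∀ x, 0 < x → g x ≠ ⊤) :
    ∫⁻ t in Ioi 0, essSup (fun τ => u τ ^ p * g τ) (volume.restrict (Ioc 0 t)) ^ (q / p) * w t ≤
      2 ^ (q / p) * (2 * (c ^ p * ∫⁻ t in Ioi 0, g t * v t) ^ (q / p)) := by
  set L := ⨅ R : Ioi (0 : ℝ), g R
  have hqp : 0 < q / p := div_pos hq hp
  calc _ ≤ ∫⁻ t in Ioi 0, ((⨆ n : ℕ, essSup (fun τ => u τ ^ p * (g (τ + 1 / ((n : ℝ) + 1)) - L))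
          (volume.restrict (Ioc 0 t))) + L * essSup u (volume.restrict (Ioc 0 t)) ^ p) ^ (q / p) *
          w t := by
        gcongr with t
        simpa only [ENNReal.essSup_rpow _ u hp] using
          hg.essSup_mul_le_iSup_add (fun τ => u τ ^ p) L t
    _ ≤ _ := ENNReal.lintegral_rpow_add_le _
        (Measurable.iSup fun n => (monotone_essSup_restrict_Ioc 0 _).measurable) hw hqp.le
    _ ≤ _ := by
        rw [two_mul]
        gcongr
        · exact hRed.lintegral_iSup_essSup_le hp hq hv hw hgm hg hfin
        · exact hOne.lintegral_mul_rpow_le hp hq hw fun x hx => iInf_le_of_le ⟨x, hx⟩ le_rfl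

theorem mainIneq5_of_redIneq5_of_oneIneq5 (hp : 0 < p) (hq : 0 < q) (hv : Measurable v)
    (hw : Measurable w) (hV : ∀ x, 0 < x → 0 < ∫⁻ s in Ioc 0 x, v s)
    (hRed : RedIneq5 p q u v w c) (hOne : OneIneq5 p q u v w c) :
    MainIneq5 p q u v w (2 ^ (1 / p + 1 / q) * c) := by
  -- `0 * ⊤ = 0`, so for `c = 0` the bound must hold even when `‖f‖_{L^p(v)} = ∞`.
  rcases eq_or_ne c 0 with rfl | hc
  · rw [mul_zero]
    exact mainIneq5_zero_of_oneIneq5_zero hq hw hOne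
  intro f hf hfa
  have hg : AntitoneOn (fun τ => f τ ^ p) (Ioi 0) := fun a ha b hb hab =>
    ENNReal.rpow_le_rpow (hfa ha hb hab) hp.le
  set I := ∫⁻ t in Ioi 0, f t ^ p * v t
  rcases eq_or_ne I ⊤ with hI | hI
  · simp [hI, hc, hp]
  have hS (t : ℝ) : essSup (fun τ => u τ * f τ) (volume.restrict (Ioc 0 t)) ^ q =
      essSup (fun τ => u τ ^ p * f τ ^ p) (volume.restrict (Ioc 0 t)) ^ (q / p) := by
    simp_rw [← ENNReal.mul_rpow_of_nonneg _ _ hp.le]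
    rw [ENNReal.essSup_rpow _ _ hp, ← ENNReal.rpow_mul, mul_div_cancel₀ q hp.ne']
  calc (∫⁻ t in Ioi 0, essSup (fun τ => u τ * f τ) (volume.restrict (Ioc 0 t)) ^ q * w t) ^ (1 / q)
      ≤ (2 ^ (q / p) * (2 * (c ^ p * I) ^ (q / p))) ^ (1 / q) := by
        simp_rw [hS]
        gcongr
        exact lintegral_essSup_mul_rpow_le hp hq hv hw hRed hOne (hf.pow_const p) hg
          fun x hx => hg.ne_top_of_setLIntegral_mul_ne_top hI hx (hV x hx)
    _ = 2 ^ (1 / p + 1 / q) * c * I ^ (1 / p) := by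
        have h2 : (2 : ℝ≥0∞) ^ (q / p) * 2 = 2 ^ (q / p + 1) := by
          rw [ENNReal.rpow_add _ _ two_ne_zero ENNReal.ofNat_ne_top, ENNReal.rpow_one]
        have he₁ : (q / p + 1) * (1 / q) = 1 / p + 1 / q := by field_simp
        have he₂ : q / p * (1 / q) = 1 / p := by field_simp
        rw [← mul_assoc, h2, ENNReal.mul_rpow_of_nonneg _ _ (by positivity), ← ENNReal.rpow_mul,
          he₁, ENNReal.mul_rpow_of_nonneg _ _ (by positivity), ← ENNReal.rpow_mul,
          mul_div_cancel₀ q hp.ne', ENNReal.mul_rpow_of_nonneg _ _ (by positivity),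
          ← ENNReal.rpow_mul, ← ENNReal.rpow_mul, he₂, mul_one_div_cancel hq.ne',
          ENNReal.rpow_one, mul_assoc]

end WeightedInequalities

theorem stmt_5_general (p q : ℝ) (hp : 0 < p) (hq : 0 < q)
    (u v w : ℝ → ℝ≥0∞) (hv : Measurable v) (hw : Measurable w)
    (hV : ∀ x : ℝ, 0 < x → 0 < (∫⁻ s in Ioc 0 x, v s) ∧ (∫⁻ s in Ioc 0 x, v s) < ⊤) :
    ∃ C : ℝ≥0∞, 0 < C ∧ C < ⊤ ∧
      ∀ c : ℝ≥0∞,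
        (MainIneq5 p q u v w c →
          RedIneq5 p q u v w (C * c) ∧ OneIneq5 p q u v w (C * c)) ∧
        (RedIneq5 p q u v w c → OneIneq5 p q u v w c →
          MainIneq5 p q u v w (C * c)) := by
  have hC : 1 ≤ (2 : ℝ≥0∞) ^ (1 / p + 1 / q) := ENNReal.one_le_rpow (by norm_num) (by positivity)
  refine ⟨2 ^ (1 / p + 1 / q), zero_lt_one.trans_le hC,
    ENNReal.rpow_lt_top_of_nonneg (by positivity) ENNReal.ofNat_ne_top, fun c => ⟨?_, ?_⟩⟩
  · intro hMain
    have hc : c ≤ 2 ^ (1 / p + 1 / q) * c := le_mul_of_one_le_left' hC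
    exact ⟨(hMain.redIneq5 hp hv).mono hp hc, hMain.oneIneq5.mono hc⟩
  · exact mainIneq5_of_redIneq5_of_oneIneq5 hp hq hv hw fun x hx => (hV x hx).1

/-- the inequality `‖S_u f‖_{L^q(w)} ≤ c ‖f‖_{L^p(v)}` on non-increasing
functions holds iff both the reduced inequality (with constant `c^p`) and the inequality
for `𝟏` hold, up to equivalence of best constants depending only on `p, q`. -/
theorem stmt_5 (p q : ℝ) (hp : 0 < p) (hq : 0 < q)
    (u v w : ℝ → ℝ≥0∞) (hu : Measurable u) (hv : Measurable v) (hw : Measurable w)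
    (hucont : ContinuousOn u (Ioi (0 : ℝ)))
    (hV : ∀ x : ℝ, 0 < x → 0 < (∫⁻ s in Ioc 0 x, v s) ∧ (∫⁻ s in Ioc 0 x, v s) < ⊤)
    (hW : ∀ x : ℝ, 0 < x → 0 < (∫⁻ s in Ioi x, w s) ∧ (∫⁻ s in Ioi x, w s) < ⊤) :
    ∃ C : ℝ≥0∞, 0 < C ∧ C < ⊤ ∧
      ∀ c : ℝ≥0∞,
        (MainIneq5 p q u v w c →
          RedIneq5 p q u v w (C * c) ∧ OneIneq5 p q u v w (C * c)) ∧
        (RedIneq5 p q u v w c → OneIneq5 p q u v w c →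
          MainIneq5 p q u v w (C * c)) :=
  stmt_5_general p q hp hq u v w hv hw hV
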